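/- Let df ≥ 1 be an integer, let ν_1, ..., ν_df ∈ [0,1) and λ_1, ..., λ_df ∈ ℝ, let X_1, ..., X_df be independent standard normal random variables, and define Q := (1/2) Σ_{j=1}^{df} (√ν_j X_j + √(1−ν_j) λ_j)² and c_l := E[Q^l] / l! for integers l ≥ 0 (so c_0 = 1). Then for every integer l ≥ 0, c_{l+1} = (1/(l+1)) Σ_{i=0}^{l} ( (1/2) Σ_{j=1}^{df} ν_j^{i} [ ν_j + (i+1)(1−ν_j) λ_j² ] ) c_{l−i}. -/

import Mathlib

open MeasureTheory ProbabilityTheory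

noncomputable section

/-- The quadratic form `Q(λ) = (1/2) Σ_j (√ν_j X_j + √(1-ν_j) λ_j)²` evaluated at the
outcome `ω` of the `df` independent standard normal variables. -/
def Qform (df : ℕ) (ν lam : Fin df → ℝ) (ω : Fin df → ℝ) : ℝ :=
  (1 / 2) * ∑ j, (Real.sqrt (ν j) * ω j + Real.sqrt (1 - ν j) * lam j) ^ 2

/-- The product of `df` standard Gaussian measures on `ℝ`. -/
def gaussPi (df : ℕ) : Measure (Fin df → ℝ) :=
  Measure.pi fun _ => gaussianReal 0 1

/-- `c_l(λ) = E[Q(λ)^l] / l!`. -/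
def cCoef (df : ℕ) (ν lam : Fin df → ℝ) (l : ℕ) : ℝ :=
  (∫ ω, Qform df ν lam ω ^ l ∂gaussPi df) / Nat.factorial l

/-!
Everything rests on Stein's identity `E[X_j P(X)] = E[∂_j P(X)]` for polynomials `P`.
Write `Y_j = a_j X_j + b_j` with `a_j = √ν_j`, `b_j = √(1 - ν_j) λ_j`, so that `Q = ½ Σ_j Y_j²`
and `∂_j Q = a_j Y_j`. For the normalised moments `m_l(P) = E[P Q^l] / l!` Stein's identity gives
`m_{l+1}(Y_j P) = a_j m_{l+1}(∂_j P) + a_j² m_l(Y_j P) + b_j m_{l+1}(P)`, hence first-order linear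
recursions with ratio `ν_j` for `m_l(Y_j)` and `m_l(Y_j²)`. Solving them writes `m_l(Y_j²)` as the
convolution of `ν_j^i (ν_j + (i + 1)(1 - ν_j) λ_j²)` with `c_l = m_l(1)`, and
`Q^{l+1} = ½ Σ_j Y_j² Q^l` gives `c_{l+1} = (l + 1)⁻¹ ½ Σ_j m_l(Y_j²)`.
-/

open Finset Real MvPolynomial

section Convolution

variable {R : Type*} [CommSemiring R]

theorem eq_sum_range_pow_mul_of_eq_mul_add {u v : ℕ → R} {r : R} (h0 : u 0 = v 0)
    (hsucc : ∀ l, u (l + 1) = r * u l + v (l + 1)) (l : ℕ) :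
    u l = ∑ i ∈ range (l + 1), r ^ i * v (l - i) := by
  induction l with
  | zero => simp [h0]
  | succ l ih =>
    rw [hsucc, ih, sum_range_succ' _ (l + 1), mul_sum]
    simp only [Nat.add_sub_add_right, Nat.sub_zero, pow_zero, one_mul, pow_succ', mul_assoc]

theorem sum_range_pow_mul_sum_range_pow_mul (r : R) (c : ℕ → R) (l : ℕ) :
    ∑ i ∈ range (l + 1), r ^ i * ∑ k ∈ range (l - i + 1), r ^ k * c (l - i - k) =
      ∑ n ∈ range (l + 1), ((n : R) + 1) * r ^ n * c (l - n) := by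
  refine (eq_sum_range_pow_mul_of_eq_mul_add
    (u := fun l => ∑ n ∈ range (l + 1), ((n : R) + 1) * r ^ n * c (l - n))
    (v := fun l => ∑ k ∈ range (l + 1), r ^ k * c (l - k)) (by simp) (fun l => ?_) l).symm
  rw [sum_range_succ' _ (l + 1), sum_range_succ' (fun k => r ^ k * c (l + 1 - k)), mul_sum,
    ← add_assoc, ← sum_add_distrib]
  simp only [Nat.add_sub_add_right, Nat.cast_add, Nat.cast_one, Nat.cast_zero, zero_add,
    pow_zero, one_mul, Nat.sub_zero]
  congr 1
  exact sum_congr rfl fun n _ => by ring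

end Convolution

theorem hasDerivAt_gaussianPDFReal (μ : ℝ) (v : NNReal) (x : ℝ) :
    HasDerivAt (gaussianPDFReal μ v) (-((x - μ) / v) * gaussianPDFReal μ v x) x := by
  refine ((((hasDerivAt_id' x).sub_const μ).fun_pow 2).fun_neg.div_const (2 * (v : ℝ))).exp
    |>.const_mul (√(2 * π * v))⁻¹ |>.congr_deriv ?_
  rw [gaussianPDFReal]
  ring

theorem integrable_gaussianPDFReal_mul_pow (n : ℕ) :
    Integrable fun x => gaussianPDFReal 0 1 x * x ^ n := by
  have h := (integrable_rpow_mul_exp_neg_mul_sq (b := 1 / 2) (by norm_num)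
    (s := n) (by linarith [n.cast_nonneg (α := ℝ)])).const_mul (√(2 * π))⁻¹
  refine h.congr (ae_of_all _ fun x => ?_)
  simp only [gaussianPDFReal, Real.rpow_natCast, NNReal.coe_one, mul_one, sub_zero]
  rw [show -(1 / 2) * x ^ 2 = -x ^ 2 / 2 by ring]
  ring

theorem integrable_pow_gaussianReal (n : ℕ) :
    Integrable (fun x : ℝ => x ^ n) (gaussianReal 0 1) :=
  (memLp_id_gaussianReal n).integrable_norm_pow'.mono' (by fun_prop)
    (ae_of_all _ fun x => by simp [norm_pow])

/-- `k - 1` is truncated: at `k = 0` both sides vanish. -/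
theorem integral_pow_succ_gaussianReal (k : ℕ) :
    ∫ x, x ^ (k + 1) ∂gaussianReal 0 1 = k * ∫ x, x ^ (k - 1) ∂gaussianReal 0 1 := by
  simp only [integral_gaussianReal_eq_integral_smul one_ne_zero, smul_eq_mul]
  have hderiv (x : ℝ) : HasDerivAt (fun x => gaussianPDFReal 0 1 x * x ^ k)
      (k * (gaussianPDFReal 0 1 x * x ^ (k - 1)) - gaussianPDFReal 0 1 x * x ^ (k + 1)) x := by
    refine (hasDerivAt_gaussianPDFReal 0 1 x).fun_mul (hasDerivAt_pow k x) |>.congr_deriv ?_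
    rcases k with _ | k
    · simp [mul_comm]
    · simp only [NNReal.coe_one, sub_zero, div_one, Nat.add_sub_cancel]
      push_cast
      ring
  have hmom := integrable_gaussianPDFReal_mul_pow
  have h := integral_eq_zero_of_hasDerivAt_of_integrable hderiv
    (((hmom _).const_mul _).sub (hmom _)) (hmom k)
  rw [integral_sub ((hmom _).const_mul _) (hmom _), integral_const_mul, sub_eq_zero] at h
  exact h.symm

local notation "𝒩[" σ "]" => Measure.pi fun _ : σ => gaussianReal 0 1

section GaussianIntegral

variable {σ : Type*} [Fintype σ]

theorem integrable_eval_gaussianPi (P : MvPolynomial σ ℝ) :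
    Integrable (fun x => eval x P) 𝒩[σ] := by
  simp_rw [eval_eq']
  exact integrable_finsetSum _ fun d _ =>
    (Integrable.fintype_prod fun i => integrable_pow_gaussianReal (d i)).const_mul _

variable (σ) in
def gaussianIntegral : MvPolynomial σ ℝ →ₗ[ℝ] ℝ where
  toFun P := ∫ x, eval x P ∂𝒩[σ]
  map_add' P Q := by
    simp only [map_add]
    exact integral_add (integrable_eval_gaussianPi P) (integrable_eval_gaussianPi Q)
  map_smul' r P := by
    simp only [smul_eval, RingHom.id_apply, smul_eq_mul]
    exact integral_const_mul r _

theorem gaussianIntegral_apply (P : MvPolynomial σ ℝ) :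
    gaussianIntegral σ P = ∫ x, eval x P ∂𝒩[σ] := rfl

theorem gaussianIntegral_monomial (d : σ →₀ ℕ) (c : ℝ) :
    gaussianIntegral σ (monomial d c) = c * ∏ i, ∫ x, x ^ d i ∂gaussianReal 0 1 := by
  simp only [gaussianIntegral_apply, eval_monomial,
    Finsupp.prod_fintype _ _ (fun _ => pow_zero _), integral_const_mul]
  rw [integral_fintype_prod_eq_prod (fun _ x => x ^ _)]

theorem gaussianIntegral_X_mul (j : σ) (P : MvPolynomial σ ℝ) :
    gaussianIntegral σ (X j * P) = gaussianIntegral σ (pderiv j P) := by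
  classical
  induction P using MvPolynomial.induction_on' with
  | monomial d c =>
    have hcompl (e : σ →₀ ℕ) :
        ∏ i ∈ {j}ᶜ, ∫ x, x ^ (e + Finsupp.single j 1 : σ →₀ ℕ) i
            ∂gaussianReal 0 1 =
          ∏ i ∈ {j}ᶜ, ∫ x, x ^ (e - Finsupp.single j 1 : σ →₀ ℕ) i
            ∂gaussianReal 0 1 := by
      refine prod_congr rfl fun i hi => ?_
      rw [Finsupp.add_apply, Finsupp.tsub_apply, Finsupp.single_eq_of_ne (by simpa using hi),
        add_zero, Nat.sub_zero]
    rw [X, monomial_mul, one_mul, add_comm, pderiv_monomial, gaussianIntegral_monomial,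
      gaussianIntegral_monomial, Fintype.prod_eq_mul_prod_compl j,
      Fintype.prod_eq_mul_prod_compl j, hcompl]
    simp only [Finsupp.add_apply, Finsupp.tsub_apply, Finsupp.single_eq_same,
      integral_pow_succ_gaussianReal]
    ring
  | add P Q hP hQ => rw [mul_add, map_add, map_add, map_add, hP, hQ]

end GaussianIntegral

section QuadraticForm

variable {σ : Type*} (a b : σ → ℝ)

def affineCoord (j : σ) : MvPolynomial σ ℝ := C (a j) * X j + C (b j)

theorem pderiv_affineCoord_self (j : σ) : pderiv j (affineCoord a b j) = C (a j) := by
  simp [affineCoord]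

variable [Fintype σ]

def quadForm : MvPolynomial σ ℝ := C (1 / 2) * ∑ j, affineCoord a b j ^ 2

def momentCoef (P : MvPolynomial σ ℝ) (l : ℕ) : ℝ :=
  gaussianIntegral σ (P * quadForm a b ^ l) / l.factorial

theorem eval_quadForm (x : σ → ℝ) :
    eval x (quadForm a b) = 1 / 2 * ∑ j, (a j * x j + b j) ^ 2 := by
  simp [quadForm, affineCoord]

theorem pderiv_quadForm (j : σ) : pderiv j (quadForm a b) = C (a j) * affineCoord a b j := by
  classical
  have half : (C 2⁻¹ : MvPolynomial σ ℝ) * 2 = 1 := by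
    rw [← map_ofNat C 2, ← C_mul, inv_mul_cancel₀ two_ne_zero, C_1]
  simp only [quadForm, one_div, affineCoord, Derivation.leibniz, map_sum, Derivation.leibniz_pow,
    Nat.add_one_sub_one, pow_one, map_add, pderiv_X, Pi.single_apply, smul_eq_mul, mul_ite, mul_one,
    mul_zero, derivation_C, add_zero, smul_ite, nsmul_eq_mul, Nat.cast_ofNat,
    sum_ite_eq', mem_univ, ↓reduceIte]
  linear_combination (C (a j) * (C (a j) * X j + C (b j))) * half

theorem gaussianIntegral_affineCoord_mul (j : σ) (P : MvPolynomial σ ℝ) :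
    gaussianIntegral σ (affineCoord a b j * P) =
      a j * gaussianIntegral σ (pderiv j P) + b j * gaussianIntegral σ P := by
  rw [affineCoord, add_mul, mul_assoc, C_mul', C_mul', map_add, map_smul, map_smul,
    gaussianIntegral_X_mul, smul_eq_mul, smul_eq_mul]

theorem momentCoef_zero_left (l : ℕ) : momentCoef a b 0 l = 0 := by
  simp [momentCoef]

theorem momentCoef_affineCoord_mul_zero (j : σ) (P : MvPolynomial σ ℝ) :
    momentCoef a b (affineCoord a b j * P) 0 =
      a j * momentCoef a b (pderiv j P) 0 + b j * momentCoef a b P 0 := by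
  simp [momentCoef, gaussianIntegral_affineCoord_mul]

theorem momentCoef_affineCoord_mul_succ (j : σ) (P : MvPolynomial σ ℝ) (l : ℕ) :
    momentCoef a b (affineCoord a b j * P) (l + 1) =
      a j * momentCoef a b (pderiv j P) (l + 1) +
        a j ^ 2 * momentCoef a b (affineCoord a b j * P) l + b j * momentCoef a b P (l + 1) := by
  have hderiv : pderiv j (P * quadForm a b ^ (l + 1)) = pderiv j P * quadForm a b ^ (l + 1) +
      C (((l : ℝ) + 1) * a j) * (affineCoord a b j * P * quadForm a b ^ l) := by
    rw [Derivation.leibniz, Derivation.leibniz_pow, pderiv_quadForm, C_mul]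
    simp only [smul_eq_mul, nsmul_eq_mul, Nat.add_sub_cancel, Nat.cast_add, Nat.cast_one,
      map_add, map_one, map_natCast]
    ring
  simp only [momentCoef, mul_assoc, gaussianIntegral_affineCoord_mul, hderiv, map_add, C_mul',
    map_smul, smul_eq_mul, Nat.factorial_succ, Nat.cast_mul]
  push_cast
  field_simp

theorem momentCoef_affineCoord (j : σ) (l : ℕ) :
    momentCoef a b (affineCoord a b j) l =
      b j * ∑ i ∈ range (l + 1), (a j ^ 2) ^ i * momentCoef a b 1 (l - i) := by
  have h := eq_sum_range_pow_mul_of_eq_mul_add (u := momentCoef a b (affineCoord a b j))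
    (r := a j ^ 2) (v := fun l => b j * momentCoef a b 1 l)
    (by simpa [momentCoef_zero_left] using momentCoef_affineCoord_mul_zero a b j 1)
    (fun l => by simpa [momentCoef_zero_left] using momentCoef_affineCoord_mul_succ a b j 1 l) l
  rw [h, mul_sum]
  exact sum_congr rfl fun i _ => by ring

theorem momentCoef_affineCoord_sq (j : σ) (l : ℕ) :
    momentCoef a b (affineCoord a b j ^ 2) l =
      ∑ i ∈ range (l + 1),
        (a j ^ 2) ^ i * (a j ^ 2 + (i + 1) * b j ^ 2) * momentCoef a b 1 (l - i) := by
  have hderiv (l : ℕ) :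
      momentCoef a b (pderiv j (affineCoord a b j)) l = a j * momentCoef a b 1 l := by
    simp [momentCoef, pderiv_affineCoord_self, C_mul', mul_div_assoc]
  have h := eq_sum_range_pow_mul_of_eq_mul_add
    (u := momentCoef a b (affineCoord a b j ^ 2)) (r := a j ^ 2)
    (v := fun l => a j ^ 2 * momentCoef a b 1 l + b j * momentCoef a b (affineCoord a b j) l)
    (by rw [sq, momentCoef_affineCoord_mul_zero, hderiv]; ring)
    (fun l => by rw [sq, momentCoef_affineCoord_mul_succ, hderiv]; ring) l
  set r := a j ^ 2
  set c := momentCoef a b 1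
  calc momentCoef a b (affineCoord a b j ^ 2) l
      = ∑ i ∈ range (l + 1), (r ^ i * (r * c (l - i)) +
          b j ^ 2 * (r ^ i * ∑ k ∈ range (l - i + 1), r ^ k * c (l - i - k))) := by
        rw [h]
        simp only [momentCoef_affineCoord]
        exact sum_congr rfl fun i _ => by ring
    _ = ∑ i ∈ range (l + 1), r ^ i * (r * c (l - i)) +
          b j ^ 2 * ∑ n ∈ range (l + 1), ((n : ℝ) + 1) * r ^ n * c (l - n) := by
        rw [sum_add_distrib, ← mul_sum, sum_range_pow_mul_sum_range_pow_mul]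
    _ = _ := by
        rw [mul_sum, ← sum_add_distrib]
        exact sum_congr rfl fun i _ => by ring

theorem momentCoef_one_succ_eq_sum_momentCoef_affineCoord_sq (l : ℕ) :
    momentCoef a b 1 (l + 1) =
      1 / ((l : ℝ) + 1) * ((1 / 2) * ∑ j, momentCoef a b (affineCoord a b j ^ 2) l) := by
  have hpow : quadForm a b ^ (l + 1) =
      (1 / 2 : ℝ) • ∑ j, affineCoord a b j ^ 2 * quadForm a b ^ l := by
    rw [pow_succ', quadForm, C_mul', smul_mul_assoc, sum_mul]
  simp only [momentCoef, one_mul, hpow, map_smul, map_sum, smul_eq_mul, Nat.factorial_succ,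
    Nat.cast_mul, ← sum_div]
  push_cast
  field_simp

theorem momentCoef_one_succ (l : ℕ) :
    momentCoef a b 1 (l + 1) =
      1 / ((l : ℝ) + 1) * ∑ i ∈ range (l + 1),
        ((1 / 2) * ∑ j, (a j ^ 2) ^ i * (a j ^ 2 + (i + 1) * b j ^ 2)) *
          momentCoef a b 1 (l - i) := by
  rw [momentCoef_one_succ_eq_sum_momentCoef_affineCoord_sq]
  simp only [momentCoef_affineCoord_sq]
  rw [sum_comm]
  simp only [mul_sum, sum_mul]
  exact sum_congr rfl fun i _ => sum_congr rfl fun j _ => by ring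

end QuadraticForm

theorem cCoef_eq_momentCoef (df : ℕ) (ν lam : Fin df → ℝ) (l : ℕ) :
    cCoef df ν lam l = momentCoef (fun j => √(ν j)) (fun j => √(1 - ν j) * lam j) 1 l := by
  simp only [cCoef, momentCoef, one_mul, gaussianIntegral_apply, map_pow, eval_quadForm, Qform,
    gaussPi]

theorem statement11_general (df : ℕ) (ν lam : Fin df → ℝ)
    (hν : ∀ j, 0 ≤ ν j ∧ ν j < 1) :
    ∀ l : ℕ,
      cCoef df ν lam (l + 1) =
        (1 / ((l : ℝ) + 1)) *
          ∑ i ∈ Finset.range (l + 1),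
            ((1 / 2) * ∑ j, ν j ^ i * (ν j + ((i : ℝ) + 1) * (1 - ν j) * lam j ^ 2)) *
              cCoef df ν lam (l - i) := by
  intro l
  have hν_sq (j : Fin df) : √(ν j) ^ 2 = ν j := sq_sqrt (hν j).1
  have hlam_sq (j : Fin df) : (√(1 - ν j) * lam j) ^ 2 = (1 - ν j) * lam j ^ 2 := by
    rw [mul_pow, sq_sqrt (sub_nonneg.mpr (hν j).2.le)]
  simp only [cCoef_eq_momentCoef, momentCoef_one_succ, hν_sq, hlam_sq, mul_assoc]

theorem statement11 (df : ℕ) (hdf : 1 ≤ df) (ν lam : Fin df → ℝ)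
    (hν : ∀ j, 0 ≤ ν j ∧ ν j < 1) :
    ∀ l : ℕ,
      cCoef df ν lam (l + 1) =
        (1 / ((l : ℝ) + 1)) *
          ∑ i ∈ Finset.range (l + 1),
            ((1 / 2) * ∑ j, ν j ^ i * (ν j + ((i : ℝ) + 1) * (1 - ν j) * lam j ^ 2)) *
              cCoef df ν lam (l - i) :=
  statement11_general df ν lam hν
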